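/- Let k be an integer with k ≥ 1 and m ∈ ℤ. Define ₁F₁(a; b; z) = Σ_{n=0}^∞ ((a)_n / (b)_n) zⁿ/n!, Ψ_{m,k}(θ,y) = e^{−i m θ/2} e^{−y²/2} y^k · ₁F₁( (1 + 2k − m)/4 ; k + 1/2 ; y² ), and for smooth F : ℝ² → ℂ define (E⁻ F)(θ,y) = −e^{iθ} ( ∂_y F(θ,y) + y F(θ,y) ). Then for all (θ,y) ∈ ℝ²: (E⁻ Ψ_{m,k})(θ,y) = −( (1 + 2k − m)(k−1) / ((2k−1)(2k+1)) ) · Ψ_{m−2,k+1}(θ,y) − k · Ψ_{m−2,k−1}(θ,y). -/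

import Mathlib

open Complex

/-- The confluent hypergeometric function
`₁F₁(a;b;z) = Σ_{n≥0} ((a)_n/(b)_n) zⁿ/n!` (Pochhammer rising factorials). -/
noncomputable def oneFone (a b z : ℂ) : ℂ :=
  ∑' n : ℕ, ((ascPochhammer ℂ n).eval a / (ascPochhammer ℂ n).eval b) * z ^ n
    / (n.factorial : ℂ)

/-- The weight-`m` `K`-finite vector
`Ψ_{m,k}(θ,y) = e^{-imθ/2} e^{-y²/2} y^k ₁F₁((1+2k-m)/4; k+1/2; y²)`. -/
noncomputable def Psi (m : ℤ) (k : ℕ) (θ y : ℝ) : ℂ :=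
  Complex.exp (-I * (m : ℂ) * (θ : ℂ) / 2) * Complex.exp (-(y : ℂ) ^ 2 / 2)
    * (y : ℂ) ^ k
    * oneFone ((1 + 2 * (k : ℂ) - (m : ℂ)) / 4) ((k : ℂ) + 1/2) ((y : ℂ) ^ 2)

/-- Partial derivative in the second variable `y`. -/
noncomputable def pderivY (F : ℝ → ℝ → ℂ) (θ y : ℝ) : ℂ := deriv (fun y' => F θ y') y

/-- The Heisenberg operator `(E⁻F)(θ,y) = -e^{iθ}(∂_yF + yF)`. -/
noncomputable def Eminus (F : ℝ → ℝ → ℂ) (θ y : ℝ) : ℂ :=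
  -Complex.exp (I * (θ : ℂ)) * (pderivY F θ y + (y : ℂ) * F θ y)

/-!
On the Gaussian factor `∂_y + y` acts as `e^{-y²/2} ∂_y e^{y²/2}`, so `E⁻Ψ_{m,k}` is governed by
the `y`-derivative of `y^k ₁F₁(a; k + 1/2; y²)` with `a = (1 + 2k - m)/4`. That derivative is
computed from `₁F₁'(a; b; z) = (a/b) ₁F₁(a+1; b+1; z)` and the contiguous relation
`z ₁F₁'(a; b; z) + (b-1) ₁F₁(a; b; z) = (b-1) ₁F₁(a; b-1; z)`, both termwise identities between
Pochhammer quotients. Passing from `m` to `m - 2` turns `a` into `a + 1` for `Ψ_{m-2,k+1}` and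
leaves it unchanged for `Ψ_{m-2,k-1}`.
-/

open Filter Topology

section PowerSeries

variable {c ρ : ℕ → ℂ}

theorem summable_norm_mul_pow_of_tendsto_ratio (hc : ∀ n, c (n + 1) = ρ n * c n)
    (hρ : Tendsto ρ atTop (𝓝 0)) (r : ℝ) : Summable fun n => ‖c n‖ * r ^ n := by
  have hsmall : ∀ᶠ n in atTop, ‖ρ n‖ * |r| ≤ 1 / 2 := by
    have : Tendsto (fun n => ‖ρ n‖ * |r|) atTop (𝓝 0) := by
      simpa using (tendsto_norm_zero.comp hρ).mul_const |r|
    exact this.eventually (ge_mem_nhds (by norm_num))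
  refine summable_of_ratio_norm_eventually_le (by norm_num : (1 / 2 : ℝ) < 1) ?_
  filter_upwards [hsmall] with n hn
  calc ‖‖c (n + 1)‖ * r ^ (n + 1)‖ = ‖ρ n‖ * |r| * ‖‖c n‖ * r ^ n‖ := by
        simp only [hc, norm_mul, norm_pow, Real.norm_eq_abs, abs_norm, pow_succ]; ring
    _ ≤ 1 / 2 * ‖‖c n‖ * r ^ n‖ := by gcongr

theorem hasDerivAt_tsum_mul_pow (hc : ∀ r : ℝ, Summable fun n => ‖c n‖ * r ^ n) (z : ℂ) :
    HasDerivAt (fun w => ∑' n, c n * w ^ n) (∑' n, (n + 1) * c (n + 1) * z ^ n) z := by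
  set R := ‖z‖ + 1
  have hR : 1 ≤ R := by simp [R]
  have hbound : ∀ n (w : ℂ), w ∈ Metric.ball 0 R →
      ‖c n * (n * w ^ (n - 1))‖ ≤ ‖c n‖ * (2 * R) ^ n := by
    intro n w hw
    rw [mem_ball_zero_iff] at hw
    rw [norm_mul, norm_mul, norm_pow, Complex.norm_natCast, mul_pow]
    have hn : (n : ℝ) ≤ 2 ^ n := by exact_mod_cast Nat.lt_two_pow_self.le
    have hw' : ‖w‖ ^ (n - 1) ≤ R ^ n :=
      (pow_le_pow_left₀ (norm_nonneg w) hw.le _).trans (pow_le_pow_right₀ hR (Nat.sub_le n 1))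
    gcongr
  have hz : z ∈ Metric.ball 0 R := mem_ball_zero_iff.2 (lt_add_one _)
  have hsum : Summable fun n => c n * z ^ n :=
    .of_norm_bounded (hc ‖z‖) fun n => by rw [norm_mul, norm_pow]
  have hderiv := hasDerivAt_tsum_of_isPreconnected (hc (2 * R)) Metric.isOpen_ball
    (convex_ball 0 R).isPreconnected (fun n w _ => (hasDerivAt_pow n w).const_mul (c n))
    hbound hz hsum hz
  refine hderiv.congr_deriv ?_
  rw [tsum_eq_zero_add' ?_]
  · simp only [Nat.cast_zero, zero_mul, mul_zero, zero_add, Nat.cast_add, Nat.cast_one,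
      Nat.add_sub_cancel]
    exact tsum_congr fun n => by ring
  · exact (Summable.of_norm_bounded (hc (2 * R)) fun n => hbound n z hz).comp_injective
      (add_left_injective 1)

end PowerSeries

theorem ascPochhammer_succ_eval_left (n : ℕ) (x : ℂ) :
    (ascPochhammer ℂ (n + 1)).eval x = x * (ascPochhammer ℂ n).eval (x + 1) := by
  simp [ascPochhammer_succ_left, Polynomial.eval_comp]

theorem ascPochhammer_eval_ne_zero {b : ℂ} (hb : ∀ i : ℕ, b + i ≠ 0) (n : ℕ) :
    (ascPochhammer ℂ n).eval b ≠ 0 := by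
  induction n with
  | zero => simp
  | succ n ih => rw [ascPochhammer_succ_eval]; exact mul_ne_zero ih (hb n)

section Hypergeometric

open scoped Nat

noncomputable def hgCoeff (a b : ℂ) (n : ℕ) : ℂ :=
  (ascPochhammer ℂ n).eval a / ((ascPochhammer ℂ n).eval b * n !)

variable (a b : ℂ)

theorem oneFone_eq_tsum (z : ℂ) : oneFone a b z = ∑' n, hgCoeff a b n * z ^ n :=
  tsum_congr fun n => by rw [hgCoeff]; ring

theorem hgCoeff_succ (n : ℕ) :
    hgCoeff a b (n + 1) = (a + n) / ((b + n) * (n + 1)) * hgCoeff a b n := by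
  simp only [hgCoeff, ascPochhammer_succ_eval, Nat.factorial_succ, Nat.cast_mul, Nat.cast_succ]
  rw [div_mul_div_comm]
  congr 1 <;> ring

theorem tendsto_hgCoeff_ratio :
    Tendsto (fun n : ℕ => (a + n) / ((b + n) * (n + 1))) atTop (𝓝 0) := by
  have h1 : Tendsto (fun n : ℕ => (a + 1 * n) / (b + 1 * n)) atTop (𝓝 (1 / 1)) :=
    tendsto_add_mul_div_add_mul_atTop_nhds a b 1 one_ne_zero
  have h2 := h1.mul (tendsto_one_div_add_atTop_nhds_zero_nat (𝕜 := ℂ))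
  rw [mul_zero] at h2
  refine h2.congr fun n => ?_
  rw [div_mul_div_comm, mul_one, one_mul]

theorem summable_norm_hgCoeff_mul_pow (r : ℝ) : Summable fun n => ‖hgCoeff a b n‖ * r ^ n :=
  summable_norm_mul_pow_of_tendsto_ratio (hgCoeff_succ a b) (tendsto_hgCoeff_ratio a b) r

theorem succ_mul_hgCoeff_succ (n : ℕ) :
    (n + 1) * hgCoeff a b (n + 1) = a / b * hgCoeff (a + 1) (b + 1) n := by
  simp only [hgCoeff, ascPochhammer_succ_eval_left, Nat.factorial_succ, Nat.cast_mul,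
    Nat.cast_succ]
  rw [show b * (ascPochhammer ℂ n).eval (b + 1) * ((n + 1) * n !)
      = (n + 1) * (b * ((ascPochhammer ℂ n).eval (b + 1) * n !)) by ring,
    mul_div_assoc', mul_div_mul_left _ _ n.cast_add_one_ne_zero, mul_div_mul_comm]

theorem hasDerivAt_oneFone (z : ℂ) :
    HasDerivAt (oneFone a b) (a / b * oneFone (a + 1) (b + 1) z) z := by
  have h := hasDerivAt_tsum_mul_pow (summable_norm_hgCoeff_mul_pow a b) z
  simp only [succ_mul_hgCoeff_succ, mul_assoc] at h
  rw [oneFone_eq_tsum, ← tsum_mul_left]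
  convert h using 1
  exact funext (oneFone_eq_tsum a b)

theorem add_sub_one_mul_hgCoeff (hb : ∀ i : ℕ, b - 1 + i ≠ 0) (n : ℕ) :
    (n + b - 1) * hgCoeff a b n = (b - 1) * hgCoeff a (b - 1) n := by
  have hshift : (b - 1) * (ascPochhammer ℂ n).eval b
      = (ascPochhammer ℂ n).eval (b - 1) * (b - 1 + n) := by
    rw [← ascPochhammer_succ_eval, ascPochhammer_succ_eval_left, sub_add_cancel]
  have h0 := ascPochhammer_eval_ne_zero hb n
  have h1 : (ascPochhammer ℂ n).eval b ≠ 0 :=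
    right_ne_zero_of_mul (hshift ▸ mul_ne_zero h0 (hb n))
  have h2 : (n ! : ℂ) ≠ 0 := Nat.cast_ne_zero.2 n.factorial_ne_zero
  unfold hgCoeff
  field_simp
  linear_combination -(ascPochhammer ℂ n).eval a * hshift

theorem summable_hgCoeff_mul_pow (z : ℂ) : Summable fun n => hgCoeff a b n * z ^ n :=
  .of_norm_bounded (summable_norm_hgCoeff_mul_pow a b ‖z‖) fun n => by rw [norm_mul, norm_pow]

theorem oneFone_contiguous (hb : ∀ i : ℕ, b - 1 + i ≠ 0) (z : ℂ) :
    z * (a / b * oneFone (a + 1) (b + 1) z) + (b - 1) * oneFone a b z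
      = (b - 1) * oneFone a (b - 1) z := by
  have hterm : ∀ n : ℕ, ((n + 1 : ℕ) : ℂ) * hgCoeff a b (n + 1) * z ^ (n + 1)
      = z * (a / b) * (hgCoeff (a + 1) (b + 1) n * z ^ n) := fun n => by
    rw [Nat.cast_succ, succ_mul_hgCoeff_succ, pow_succ]; ring
  have hsum : Summable fun n : ℕ => (n : ℂ) * hgCoeff a b n * z ^ n := by
    rw [← summable_nat_add_iff 1]
    simpa only [hterm] using (summable_hgCoeff_mul_pow (a + 1) (b + 1) z).mul_left (z * (a / b))
  have hshift : z * (a / b * oneFone (a + 1) (b + 1) z) = ∑' n : ℕ, n * hgCoeff a b n * z ^ n := by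
    rw [tsum_eq_zero_add' ((summable_nat_add_iff 1).2 hsum), oneFone_eq_tsum, ← tsum_mul_left,
      ← tsum_mul_left]
    simp only [hterm, Nat.cast_zero, zero_mul, zero_add, mul_assoc]
  rw [hshift, oneFone_eq_tsum, oneFone_eq_tsum, ← tsum_mul_left, ← tsum_mul_left,
    ← hsum.tsum_add ((summable_hgCoeff_mul_pow a b z).mul_left _)]
  exact tsum_congr fun n => by linear_combination z ^ n * add_sub_one_mul_hgCoeff a b hb n

end Hypergeometric

theorem natCast_sub_half_ne_zero (n : ℕ) : (n : ℂ) - 1 / 2 ≠ 0 := by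
  intro h
  have h2 : ((2 * n : ℕ) : ℂ) = (1 : ℕ) := by push_cast; linear_combination 2 * h
  have := Nat.cast_injective h2
  omega

theorem hasDerivAt_pow_mul_oneFone_sq (k : ℕ) (a : ℂ) (y : ℝ) :
    HasDerivAt (fun t : ℝ => (t : ℂ) ^ k * oneFone a (k + 1 / 2) ((t : ℂ) ^ 2))
      (4 * a * (k - 1) / ((2 * k - 1) * (2 * k + 1)) * (y : ℂ) ^ (k + 1)
          * oneFone (a + 1) (k + 1 / 2 + 1) ((y : ℂ) ^ 2)
        + k * (y : ℂ) ^ (k - 1) * oneFone a (k + 1 / 2 - 1) ((y : ℂ) ^ 2)) y := by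
  have hb : ∀ i : ℕ, (k + 1 / 2 : ℂ) - 1 + i ≠ 0 := fun i => by
    convert natCast_sub_half_ne_zero (k + i) using 1; push_cast; ring
  have hb0 : (k + 1 / 2 : ℂ) ≠ 0 := by
    convert natCast_sub_half_ne_zero (k + 1) using 1; push_cast; ring
  have hkm : (k * 2 - 1 : ℂ) ≠ 0 := by
    convert mul_ne_zero two_ne_zero (natCast_sub_half_ne_zero k) using 1; ring
  have hkp : (k * 2 + 1 : ℂ) ≠ 0 := by
    convert mul_ne_zero two_ne_zero hb0 using 1; ring
  have hsq := (hasDerivAt_pow 2 (y : ℂ)).comp_ofReal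
  have hF := (hasDerivAt_oneFone a (k + 1 / 2) ((y : ℂ) ^ 2)).comp y hsq
  refine ((hasDerivAt_pow k (y : ℂ)).comp_ofReal.mul hF).congr_deriv ?_
  have hc := oneFone_contiguous a (k + 1 / 2) hb ((y : ℂ) ^ 2)
  have hk : (k : ℂ) * (y : ℂ) ^ (k - 1) * y = k * (y : ℂ) ^ k := by
    cases k <;> simp [pow_succ, mul_assoc]
  -- `hc` scaled by `k / (k - 1/2)` eliminates `₁F₁(a; k+1/2)`; `hk` turns `k y^(k-1) y` into `k y^k`
  linear_combination (norm := skip) 2 * k / (2 * k - 1) * (y : ℂ) ^ (k - 1) * hc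
    - 2 / (2 * k - 1) * y * (a / (k + 1 / 2) * oneFone (a + 1) (k + 1 / 2 + 1) ((y : ℂ) ^ 2)) * hk
  simp only [Function.comp_apply, Nat.cast_ofNat, Nat.add_one_sub_one, pow_one]
  field_simp
  ring

theorem hasDerivAt_gaussian_mul {f : ℝ → ℂ} {f' : ℂ} {y : ℝ} (hf : HasDerivAt f f' y) :
    HasDerivAt (fun t : ℝ => exp (-(t : ℂ) ^ 2 / 2) * f t)
      (exp (-(y : ℂ) ^ 2 / 2) * (f' - y * f y)) y := by
  have hg : HasDerivAt (fun t : ℝ => exp (-(t : ℂ) ^ 2 / 2)) (exp (-(y : ℂ) ^ 2 / 2) * -y) y := by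
    have h : HasDerivAt (fun x : ℂ => -x ^ 2 / 2) (-(y : ℂ)) y :=
      ((hasDerivAt_pow 2 (y : ℂ)).neg.div_const 2).congr_deriv (by norm_num; ring)
    exact h.cexp.comp_ofReal
  exact (hg.mul hf).congr_deriv (by ring)

theorem Psi_eq_exp_mul (m : ℤ) (k : ℕ) (θ y : ℝ) :
    Psi m k θ y = exp (-I * m * θ / 2) * (exp (-(y : ℂ) ^ 2 / 2)
      * ((y : ℂ) ^ k * oneFone ((1 + 2 * k - m) / 4) (k + 1 / 2) ((y : ℂ) ^ 2))) := by
  rw [Psi]; ring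

theorem exp_neg_I_mul_sub_two (m : ℤ) (θ : ℝ) :
    exp (-I * ((m - 2 : ℤ) : ℂ) * θ / 2) = exp (I * θ) * exp (-I * m * θ / 2) := by
  rw [← exp_add]; push_cast; ring_nf

theorem Eminus_action_general (k : ℕ) (m : ℤ) :
    ∀ θ y : ℝ,
      Eminus (Psi m k) θ y
        = -((1 + 2 * (k : ℂ) - (m : ℂ)) * ((k : ℂ) - 1)
              / ((2 * (k : ℂ) - 1) * (2 * (k : ℂ) + 1))) * Psi (m - 2) (k + 1) θ y
          - (k : ℂ) * Psi (m - 2) (k - 1) θ y := by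
  intro θ y
  have hD := (hasDerivAt_gaussian_mul
    (hasDerivAt_pow_mul_oneFone_sq k ((1 + 2 * k - m) / 4) y)).const_mul (exp (-I * m * θ / 2))
  have hup : Psi (m - 2) (k + 1) θ y = exp (I * θ) * exp (-I * m * θ / 2) * exp (-(y : ℂ) ^ 2 / 2)
      * ((y : ℂ) ^ (k + 1) * oneFone ((1 + 2 * k - m) / 4 + 1) (k + 1 / 2 + 1) ((y : ℂ) ^ 2)) := by
    rw [Psi_eq_exp_mul, exp_neg_I_mul_sub_two]
    push_cast
    ring_nf
  have hdown : (k : ℂ) * Psi (m - 2) (k - 1) θ y = exp (I * θ) * exp (-I * m * θ / 2)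
      * exp (-(y : ℂ) ^ 2 / 2)
      * (k * (y : ℂ) ^ (k - 1) * oneFone ((1 + 2 * k - m) / 4) (k + 1 / 2 - 1) ((y : ℂ) ^ 2)) := by
    -- at `k = 0` both sides vanish, although `k - 1` truncates to `0`
    rcases k with _ | k
    · simp
    · rw [Nat.add_sub_cancel, Psi_eq_exp_mul, exp_neg_I_mul_sub_two]
      push_cast
      ring_nf
  simp_rw [Eminus, pderivY, Psi_eq_exp_mul m k θ]
  rw [hD.deriv, hup, hdown]
  ring

/-- The Heisenberg action ties adjacent eigenspaces together:
`E⁻Ψ_{m,k} = -((1+2k-m)(k-1)/((2k-1)(2k+1))) Ψ_{m-2,k+1} - k Ψ_{m-2,k-1}`. -/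
theorem Eminus_action (k : ℕ) (hk : 1 ≤ k) (m : ℤ) :
    ∀ θ y : ℝ,
      Eminus (Psi m k) θ y
        = -((1 + 2 * (k : ℂ) - (m : ℂ)) * ((k : ℂ) - 1)
              / ((2 * (k : ℂ) - 1) * (2 * (k : ℂ) + 1))) * Psi (m - 2) (k + 1) θ y
          - (k : ℂ) * Psi (m - 2) (k - 1) θ y :=
  Eminus_action_general k m
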